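/- Fix p ∈ [1,∞], D ∈ 𝒟̄^p and β > 0. The functional ρ : L^p → ℝ defined by ρ(X) = E[X] + D(X) + (e^{−β·D(X)} − 1)/β is a convex risk measure but is not a coherent risk measure. -/

import Mathlib

open MeasureTheory Filter Set
open scoped ENNReal

noncomputable section

variable {Ω : Type*} [MeasurableSpace Ω]

/-- The measure `μ` is nonatomic. -/
def Nonatomic (μ : Measure Ω) : Prop :=
  ∀ A : Set Ω, MeasurableSet A → 0 < μ A →
    ∃ B, B ⊆ A ∧ MeasurableSet B ∧ 0 < μ B ∧ μ B < μ A

/-- `X` is a.s. equal to a constant. -/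
def AEConst (μ : Measure Ω) (X : Ω → ℝ) : Prop :=
  ∃ c : ℝ, X =ᵐ[μ] fun _ => c

/-- `D` is a deviation measure on `L^p`: it is `[0,∞)`-valued and satisfies
(D1) translation invariance, (D2) strict positivity on nonconstant random variables,
(D3) positive homogeneity and (D4) subadditivity. -/
def IsDeviation (μ : Measure Ω) (p : ℝ≥0∞) (D : (Ω → ℝ) → ℝ) : Prop :=
  (∀ X, MemLp X p μ → 0 ≤ D X) ∧
  (∀ X, MemLp X p μ → ∀ c : ℝ, D (fun ω => X ω + c) = D X) ∧
  (∀ X, MemLp X p μ → ¬ AEConst μ X → 0 < D X) ∧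
  (∀ X, MemLp X p μ → ∀ l : ℝ, 0 ≤ l → D (fun ω => l * X ω) = l * D X) ∧
  (∀ X Y, MemLp X p μ → MemLp Y p μ → D (fun ω => X ω + Y ω) ≤ D X + D Y)

/-- (D5) law invariance. -/
def LawInvariant (μ : Measure Ω) (p : ℝ≥0∞) (D : (Ω → ℝ) → ℝ) : Prop :=
  ∀ X Y, MemLp X p μ → MemLp Y p μ → μ.map X = μ.map Y → D X = D Y

/-- `D` is range normalized: the supremum over nonconstant `X ∈ L^p` of
`D X / (ess-sup X - E[X])` equals `1` (the ratio being interpreted as `0` when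
`ess-sup X = ∞`, so that only essentially bounded `X` matter):
`1` is an upper bound of the ratios, and no `k < 1` is an upper bound. -/
def RangeNormalized (μ : Measure Ω) (p : ℝ≥0∞) (D : (Ω → ℝ) → ℝ) : Prop :=
  (∀ X, MemLp X p μ → (∃ c : ℝ, ∀ᵐ ω ∂μ, X ω ≤ c) →
    D X ≤ essSup X μ - ∫ ω, X ω ∂μ) ∧
  (∀ k : ℝ, k < 1 → ∃ X, MemLp X p μ ∧ (∃ c : ℝ, ∀ᵐ ω ∂μ, X ω ≤ c) ∧ ¬ AEConst μ X ∧
    k * (essSup X μ - ∫ ω, X ω ∂μ) < D X)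

/-- Monotonicity [M] for a real-valued functional on `L^p`. -/
def MonotoneRM (μ : Measure Ω) (p : ℝ≥0∞) (ρ : (Ω → ℝ) → ℝ) : Prop :=
  ∀ X Y, MemLp X p μ → MemLp Y p μ → (∀ᵐ ω ∂μ, X ω ≤ Y ω) → ρ X ≤ ρ Y

/-- Cash additivity [CA]. -/
def CashAdditive (μ : Measure Ω) (p : ℝ≥0∞) (ρ : (Ω → ℝ) → ℝ) : Prop :=
  ∀ X, MemLp X p μ → ∀ c : ℝ, ρ (fun ω => X ω + c) = ρ X + c

/-- Positive homogeneity [PH]. -/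
def PosHom (μ : Measure Ω) (p : ℝ≥0∞) (ρ : (Ω → ℝ) → ℝ) : Prop :=
  ∀ X, MemLp X p μ → ∀ l : ℝ, 0 < l → ρ (fun ω => l * X ω) = l * ρ X

/-- Subadditivity [SA]. -/
def SubadditiveRM (μ : Measure Ω) (p : ℝ≥0∞) (ρ : (Ω → ℝ) → ℝ) : Prop :=
  ∀ X Y, MemLp X p μ → MemLp Y p μ → ρ (fun ω => X ω + Y ω) ≤ ρ X + ρ Y

/-- Convexity [Cx]. -/
def ConvexRMProp (μ : Measure Ω) (p : ℝ≥0∞) (ρ : (Ω → ℝ) → ℝ) : Prop :=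
  ∀ X Y, MemLp X p μ → MemLp Y p μ → ∀ l : ℝ, 0 ≤ l → l ≤ 1 →
    ρ (fun ω => l * X ω + (1 - l) * Y ω) ≤ l * ρ X + (1 - l) * ρ Y

/-- SSD-consistency [SC]: `ρ X ≤ ρ Y` whenever `E[u(X)] ≤ E[u(Y)]` for every
increasing convex `u` (for which both expectations exist). -/
def SSDConsistent (μ : Measure Ω) (p : ℝ≥0∞) (ρ : (Ω → ℝ) → ℝ) : Prop :=
  ∀ X Y, MemLp X p μ → MemLp Y p μ →
    (∀ u : ℝ → ℝ, Monotone u → ConvexOn ℝ univ u →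
      Integrable (fun ω => u (X ω)) μ → Integrable (fun ω => u (Y ω)) μ →
      ∫ ω, u (X ω) ∂μ ≤ ∫ ω, u (Y ω) ∂μ) →
    ρ X ≤ ρ Y

/-- Monetary risk measure: [M] and [CA]. -/
def Monetary (μ : Measure Ω) (p : ℝ≥0∞) (ρ : (Ω → ℝ) → ℝ) : Prop :=
  MonotoneRM μ p ρ ∧ CashAdditive μ p ρ

/-- Coherent risk measure: [M], [CA], [PH], [SA]. -/
def Coherent (μ : Measure Ω) (p : ℝ≥0∞) (ρ : (Ω → ℝ) → ℝ) : Prop :=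
  MonotoneRM μ p ρ ∧ CashAdditive μ p ρ ∧ PosHom μ p ρ ∧ SubadditiveRM μ p ρ

/-- Convex risk measure: monetary and [Cx]. -/
def ConvexRiskMeasure (μ : Measure Ω) (p : ℝ≥0∞) (ρ : (Ω → ℝ) → ℝ) : Prop :=
  Monetary μ p ρ ∧ ConvexRMProp μ p ρ

/-- Consistent risk measure: monetary and [SC]. -/
def ConsistentRiskMeasure (μ : Measure Ω) (p : ℝ≥0∞) (ρ : (Ω → ℝ) → ℝ) : Prop :=
  Monetary μ p ρ ∧ SSDConsistent μ p ρ

/-- Star-shaped risk measure: monetary, normalized at `0` and star-shaped. -/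
def StarShapedRM (μ : Measure Ω) (p : ℝ≥0∞) (ρ : (Ω → ℝ) → ℝ) : Prop :=
  Monetary μ p ρ ∧ ρ (fun _ => 0) = 0 ∧
    ∀ X, MemLp X p μ → ∀ l : ℝ, 0 ≤ l → l ≤ 1 → ρ (fun ω => l * X ω) ≤ l * ρ X

/-- `g ∈ 𝒢`: a risk-weighting function, i.e. a nonconstant, increasing,
1-Lipschitz function on `[0,∞)` with `g 0 = 0`. -/
def IsRiskWeight (g : ℝ → ℝ) : Prop :=
  (∃ x y : ℝ, 0 ≤ x ∧ 0 ≤ y ∧ g x ≠ g y) ∧ MonotoneOn g (Ici 0) ∧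
  (∀ x y : ℝ, 0 ≤ x → 0 ≤ y → |g x - g y| ≤ |x - y|) ∧ g 0 = 0

/-- The monotonic mean-deviation measure `MD^D_g = g ∘ D + E`. -/
def MD (μ : Measure Ω) (D : (Ω → ℝ) → ℝ) (g : ℝ → ℝ) (X : Ω → ℝ) : ℝ :=
  g (D X) + ∫ ω, X ω ∂μ

/-- `V : ℝ × [0,∞) → (−∞,∞]` defining a mean-deviation model:
increasing in each argument, `V m 0 = m`, never `−∞`, and depending
nontrivially on the deviation argument. -/
def IsMDModelV (V : ℝ → ℝ → EReal) : Prop :=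
  (∀ d : ℝ, 0 ≤ d → Monotone (fun m => V m d)) ∧
  (∀ m : ℝ, MonotoneOn (fun d => V m d) (Ici 0)) ∧
  (∀ m : ℝ, V m 0 = (m : EReal)) ∧
  (∀ m d : ℝ, 0 ≤ d → V m d ≠ ⊥) ∧
  (∃ m d₁ d₂ : ℝ, 0 ≤ d₁ ∧ 0 ≤ d₂ ∧ V m d₁ ≠ V m d₂)

/-- Monotonicity [M] for an `(−∞,∞]`-valued functional. -/
def MonotoneE (μ : Measure Ω) (p : ℝ≥0∞) (U : (Ω → ℝ) → EReal) : Prop :=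
  ∀ X Y, MemLp X p μ → MemLp Y p μ → (∀ᵐ ω ∂μ, X ω ≤ Y ω) → U X ≤ U Y

/-- Cash additivity [CA] for an `(−∞,∞]`-valued functional. -/
def CashAdditiveE (μ : Measure Ω) (p : ℝ≥0∞) (U : (Ω → ℝ) → EReal) : Prop :=
  ∀ X, MemLp X p μ → ∀ c : ℝ, U (fun ω => X ω + c) = U X + (c : EReal)

/-- SSD-consistency [SC] for an `(−∞,∞]`-valued functional. -/
def SSDConsistentE (μ : Measure Ω) (p : ℝ≥0∞) (U : (Ω → ℝ) → EReal) : Prop :=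
  ∀ X Y, MemLp X p μ → MemLp Y p μ →
    (∀ u : ℝ → ℝ, Monotone u → ConvexOn ℝ univ u →
      Integrable (fun ω => u (X ω)) μ → Integrable (fun ω => u (Y ω)) μ →
      ∫ ω, u (X ω) ∂μ ≤ ∫ ω, u (Y ω) ∂μ) →
    U X ≤ U Y

/-- Left derivative of a real function. -/
def leftDeriv (f : ℝ → ℝ) (x : ℝ) : ℝ := derivWithin f (Iio x) x

/-- The conjugate function `g*(y) = sup_{x ≥ 0} (x y − g x)`, with values in `(−∞,∞]`. -/
def conjFun (g : ℝ → ℝ) (y : ℝ) : EReal :=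
  ⨆ x : Ici (0:ℝ), ((x.1 * y - g x.1 : ℝ) : EReal)

/-- Value-at-Risk: the left `α`-quantile of `X`. -/
def VaR (μ : Measure Ω) (X : Ω → ℝ) (α : ℝ) : ℝ :=
  sInf {x : ℝ | ENNReal.ofReal α ≤ μ {ω | X ω ≤ x}}

/-- The signed Choquet integral `D_h(X) = ∫₀¹ VaR_α(X) h'(1−α) dα`. -/
def Dh (μ : Measure Ω) (h : ℝ → ℝ) (X : Ω → ℝ) : ℝ :=
  ∫ α in (0:ℝ)..1, VaR μ X α * leftDeriv h (1 - α)

/-- `Φ^p` (described via the conjugate exponent `q`): concave functions `h` on `[0,1]`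
with `h 0 = h 1 = 0` and `‖h'‖_q < ∞`. -/
def PhiSet (q : ℝ≥0∞) : Set (ℝ → ℝ) :=
  {h | ConcaveOn ℝ (Icc 0 1) h ∧ h 0 = 0 ∧ h 1 = 0 ∧
    MemLp (leftDeriv h) q ((volume : Measure ℝ).restrict (Ioo 0 1))}

/-- The `L²[0,1]` norm of a function. -/
def Lnorm2 (f : ℝ → ℝ) : ℝ := Real.sqrt (∫ t in (0:ℝ)..1, (f t) ^ 2)

/-- Left quantile function of a distribution (probability measure) on `ℝ`. -/
def qtl (ν : Measure ℝ) (u : ℝ) : ℝ := sInf {x : ℝ | ENNReal.ofReal u ≤ ν (Iic x)}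

/-- Convex order `X ≤_cx Y`: `E[φ(X)] ≤ E[φ(Y)]` for every convex `φ` for which
both expectations exist. -/
def ConvexOrder (μ : Measure Ω) (X Y : Ω → ℝ) : Prop :=
  ∀ φ : ℝ → ℝ, ConvexOn ℝ univ φ → Integrable (fun ω => φ (X ω)) μ →
    Integrable (fun ω => φ (Y ω)) μ → ∫ ω, φ (X ω) ∂μ ≤ ∫ ω, φ (Y ω) ∂μ

/-- `R` is a total preorder on `L^p`. -/
def TotalPreorderOn (μ : Measure Ω) (p : ℝ≥0∞) (R : (Ω → ℝ) → (Ω → ℝ) → Prop) : Prop :=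
  (∀ X, MemLp X p μ → R X X) ∧
  (∀ X Y Z, MemLp X p μ → MemLp Y p μ → MemLp Z p μ → R X Y → R Y Z → R X Z) ∧
  (∀ X Y, MemLp X p μ → MemLp Y p μ → R X Y ∨ R Y X)

/-- Axiom A1 (monotonicity): `X ≤ Y` a.s. implies `X ≽ Y`. -/
def AxiomA1 (μ : Measure Ω) (p : ℝ≥0∞) (R : (Ω → ℝ) → (Ω → ℝ) → Prop) : Prop :=
  ∀ X Y, MemLp X p μ → MemLp Y p μ → (∀ᵐ ω ∂μ, X ω ≤ Y ω) → R X Y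

/-- Axiom B1: for constants `c₁ ≤ c₂` one has `c₁ ≽ c₂`. -/
def AxiomB1 (R : (Ω → ℝ) → (Ω → ℝ) → Prop) : Prop :=
  ∀ c₁ c₂ : ℝ, c₁ ≤ c₂ → R (fun _ => c₁) (fun _ => c₂)

/-- Axiom A2 (translation invariance). -/
def AxiomA2 (μ : Measure Ω) (p : ℝ≥0∞) (R : (Ω → ℝ) → (Ω → ℝ) → Prop) : Prop :=
  ∀ X Y, MemLp X p μ → MemLp Y p μ → ∀ c : ℝ,
    (R X Y ↔ R (fun ω => X ω + c) (fun ω => Y ω + c))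

/-- Axiom A3 (weak positive homogeneity). -/
def AxiomA3 (μ : Measure Ω) (p : ℝ≥0∞) (R : (Ω → ℝ) → (Ω → ℝ) → Prop) : Prop :=
  ∀ X Y, MemLp X p μ → MemLp Y p μ → (∫ ω, X ω ∂μ) = (∫ ω, Y ω ∂μ) → R X Y →
    ∀ l : ℝ, 0 < l → R (fun ω => l * X ω) (fun ω => l * Y ω)

/-- Axiom A4 (risk aversion). -/
def AxiomA4 (μ : Measure Ω) (p : ℝ≥0∞) (R : (Ω → ℝ) → (Ω → ℝ) → Prop) : Prop :=
  (∀ X Y, MemLp X p μ → MemLp Y p μ → ConvexOrder μ X Y → R X Y) ∧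
  (∀ X, MemLp X p μ → ¬ AEConst μ X →
    R (fun _ => ∫ ω, X ω ∂μ) X ∧ ¬ R X (fun _ => ∫ ω, X ω ∂μ))

/-- Axiom A5 (solvability). -/
def AxiomA5 (μ : Measure Ω) (p : ℝ≥0∞) (R : (Ω → ℝ) → (Ω → ℝ) → Prop) : Prop :=
  ∀ X, MemLp X p μ → ∃ c : ℝ, R X (fun _ => c) ∧ R (fun _ => c) X

/-- Axiom A6 (weak convexity). -/
def AxiomA6 (μ : Measure Ω) (p : ℝ≥0∞) (R : (Ω → ℝ) → (Ω → ℝ) → Prop) : Prop :=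
  ∀ X Y, MemLp X p μ → MemLp Y p μ → (∫ ω, X ω ∂μ) = (∫ ω, Y ω ∂μ) →
    R X Y → R Y X →
    ∀ l : ℝ, 0 ≤ l → l ≤ 1 → R (fun ω => l * X ω + (1 - l) * Y ω) X

/-- Axiom A7 (continuity): the upper and lower sets of every `X` are closed in the
`L^p` norm (expressed via sequential closedness, equivalent in the metric space `L^p`). -/
def AxiomA7 (μ : Measure Ω) (p : ℝ≥0∞) (R : (Ω → ℝ) → (Ω → ℝ) → Prop) : Prop :=
  ∀ X, MemLp X p μ →
    (∀ (Y : ℕ → Ω → ℝ) (Z : Ω → ℝ), (∀ n, MemLp (Y n) p μ) → MemLp Z p μ →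
      Tendsto (fun n => eLpNorm (fun ω => Y n ω - Z ω) p μ) atTop (nhds 0) →
      (∀ n, R (Y n) X) → R Z X) ∧
    (∀ (Y : ℕ → Ω → ℝ) (Z : Ω → ℝ), (∀ n, MemLp (Y n) p μ) → MemLp Z p μ →
      Tendsto (fun n => eLpNorm (fun ω => Y n ω - Z ω) p μ) atTop (nhds 0) →
      (∀ n, R X (Y n)) → R X Z)

/-! Write `ρ = E + g ∘ D` with `g d = d + (e^{-β d} - 1)/β`. If `X ≤ Y`, subadditivity and the
upper bound of range normalization give `D X ≤ D Y + D (X - Y) ≤ D Y + E[Y] - E[X]`, so `ρ` is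
monotone because `g` is increasing and `1`-Lipschitz on `[0, ∞)`; cash additivity and convexity
follow from (D1), (D3), (D4) and the convexity of `g`. Since `g` is strictly convex with
`g 0 = 0`, `g (d/2) < g d / 2` for `d = D X > 0`, which positive homogeneity at `1/2` rules out. -/

def expPenalty (β d : ℝ) : ℝ := d + (Real.exp (-β * d) - 1) / β

section ExpPenalty

variable {β : ℝ}

@[simp]
lemma expPenalty_zero : expPenalty β 0 = 0 := by
  simp [expPenalty]

lemma expPenalty_le_add_sub (hβ : 0 ≤ β) {a b : ℝ} (hba : b ≤ a) :
    expPenalty β a ≤ expPenalty β b + (a - b) := by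
  have hexp : Real.exp (-β * a) ≤ Real.exp (-β * b) := Real.exp_le_exp.2 (by nlinarith)
  have := div_le_div_of_nonneg_right (sub_le_sub_right hexp 1) hβ
  unfold expPenalty
  linarith

lemma monotoneOn_expPenalty (hβ : 0 < β) : MonotoneOn (expPenalty β) (Ici 0) := by
  intro a ha b _ hab
  have hβab : 0 ≤ β * (b - a) := mul_nonneg hβ.le (sub_nonneg.2 hab)
  have hdiff : Real.exp (-β * a) - Real.exp (-β * b) ≤ β * (b - a) :=
    calc Real.exp (-β * a) - Real.exp (-β * b)
        = Real.exp (-β * a) * (1 - Real.exp (-β * (b - a))) := by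
          rw [mul_sub, mul_one, ← Real.exp_add]; ring_nf
      _ ≤ 1 * (1 - Real.exp (-β * (b - a))) := by
          gcongr
          · exact sub_nonneg.2 (Real.exp_le_one_iff.2 (by linarith))
          · exact Real.exp_le_one_iff.2 (by nlinarith [mem_Ici.1 ha])
      _ ≤ β * (b - a) := by linarith [Real.add_one_le_exp (-β * (b - a))]
  have : (Real.exp (-β * a) - 1) / β - (Real.exp (-β * b) - 1) / β ≤ b - a := by
    rw [← sub_div, div_le_iff₀ hβ]; linarith
  unfold expPenalty
  linarith

lemma lipschitzOnWith_expPenalty (hβ : 0 < β) : LipschitzOnWith 1 (expPenalty β) (Ici 0) := by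
  refine LipschitzOnWith.of_le_add fun x hx y hy => ?_
  rcases le_total x y with hxy | hyx
  · linarith [monotoneOn_expPenalty hβ hx hy hxy, dist_nonneg (x := x) (y := y)]
  · linarith [expPenalty_le_add_sub hβ.le hyx, Real.dist_eq x y ▸ le_abs_self (x - y)]

lemma strictConvexOn_expPenalty (hβ : 0 < β) : StrictConvexOn ℝ univ (expPenalty β) := by
  refine ⟨convex_univ, fun x _ y _ hxy a b ha hb hab => ?_⟩
  have hexp := strictConvexOn_exp.2 (mem_univ (-β * x)) (mem_univ (-β * y))
    ((mul_right_injective₀ (neg_ne_zero.2 hβ.ne')).ne hxy) ha hb hab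
  simp only [smul_eq_mul] at hexp ⊢
  rw [show a * (-β * x) + b * (-β * y) = -β * (a * x + b * y) by ring] at hexp
  have hdiv := div_lt_div_of_pos_right (sub_lt_sub_right hexp 1) hβ
  have hrhs : a * expPenalty β x + b * expPenalty β y
      = a * x + b * y + (a * Real.exp (-β * x) + b * Real.exp (-β * y) - 1) / β := by
    unfold expPenalty; field_simp; linear_combination (-1 : ℝ) * hab
  rw [hrhs]
  unfold expPenalty
  linarith

end ExpPenalty

section MeanDeviation

variable {μ : Measure Ω} {p : ℝ≥0∞} {D : (Ω → ℝ) → ℝ} {g : ℝ → ℝ}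

lemma essSup_nonpos_of_ae_nonpos {W : Ω → ℝ} (h : ∀ᵐ ω ∂μ, W ω ≤ 0) : essSup W μ ≤ 0 := by
  rw [essSup_eq_sInf]
  have h0 : (0 : ℝ) ∈ {a : ℝ | μ {x | a < W x} = 0} := by
    simpa [ae_iff, not_le] using h
  by_cases hbdd : BddBelow {a : ℝ | μ {x | a < W x} = 0}
  · exact csInf_le hbdd h0
  · -- e.g. `μ = 0`: `Real.sInf` of a set unbounded below is the junk value `0`
    rw [Real.sInf_of_not_bddBelow hbdd]

lemma deviation_le_add_integral_sub_of_ae_le [IsFiniteMeasure μ] (hp : 1 ≤ p)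
    (hD : IsDeviation μ p D) (hDr : RangeNormalized μ p D) {X Y : Ω → ℝ}
    (hX : MemLp X p μ) (hY : MemLp Y p μ) (hXY : ∀ᵐ ω ∂μ, X ω ≤ Y ω) :
    D X ≤ D Y + ((∫ ω, Y ω ∂μ) - ∫ ω, X ω ∂μ) := by
  set W : Ω → ℝ := fun ω => X ω - Y ω
  have hW : MemLp W p μ := hX.sub hY
  have hW0 : ∀ᵐ ω ∂μ, W ω ≤ 0 := hXY.mono fun ω h => sub_nonpos.2 h
  have hsub : D X ≤ D Y + D W := by
    simpa [W] using hD.2.2.2.2 Y W hY hW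
  have hDW : D W ≤ essSup W μ - ∫ ω, W ω ∂μ := hDr.1 W hW ⟨0, hW0⟩
  have hintW : ∫ ω, W ω ∂μ = (∫ ω, X ω ∂μ) - ∫ ω, Y ω ∂μ :=
    integral_sub (hX.integrable hp) (hY.integrable hp)
  linarith [essSup_nonpos_of_ae_nonpos hW0]

lemma monotoneRM_MD [IsFiniteMeasure μ] (hp : 1 ≤ p) (hD : IsDeviation μ p D)
    (hDr : RangeNormalized μ p D) (hg : MonotoneOn g (Ici 0))
    (hg1 : LipschitzOnWith 1 g (Ici 0)) : MonotoneRM μ p (MD μ D g) := by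
  intro X Y hX hY hXY
  set s := (∫ ω, Y ω ∂μ) - ∫ ω, X ω ∂μ
  have hs : 0 ≤ s :=
    sub_nonneg.2 (integral_mono_ae (hX.integrable hp) (hY.integrable hp) hXY)
  have hDY : D Y ∈ Ici 0 := hD.1 Y hY
  have hDYs : D Y + s ∈ Ici 0 := add_nonneg hDY hs
  have hlip : g (D Y + s) ≤ g (D Y) + s := by
    simpa [Real.dist_eq, abs_of_nonneg hs] using hg1.le_add_mul hDYs hDY
  calc MD μ D g X = g (D X) + ∫ ω, X ω ∂μ := rfl
    _ ≤ g (D Y + s) + ∫ ω, X ω ∂μ := by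
      gcongr
      exact hg (hD.1 X hX) hDYs (deviation_le_add_integral_sub_of_ae_le hp hD hDr hX hY hXY)
    _ ≤ g (D Y) + s + ∫ ω, X ω ∂μ := by gcongr
    _ = MD μ D g Y := by simp only [MD, s]; ring

lemma cashAdditive_MD [IsProbabilityMeasure μ] (hp : 1 ≤ p) (hD : IsDeviation μ p D) :
    CashAdditive μ p (MD μ D g) := by
  intro X hX c
  simp only [MD, hD.2.1 X hX c, integral_add (hX.integrable hp) (integrable_const c),
    integral_const, probReal_univ, smul_eq_mul, one_mul]
  ring

lemma convexRMProp_MD [IsFiniteMeasure μ] (hp : 1 ≤ p) (hD : IsDeviation μ p D)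
    (hg : MonotoneOn g (Ici 0)) (hgc : ConvexOn ℝ (Ici 0) g) : ConvexRMProp μ p (MD μ D g) := by
  intro X Y hX hY l hl0 hl1
  have hl0' : 0 ≤ 1 - l := sub_nonneg.2 hl1
  have hlX : MemLp (fun ω => l * X ω) p μ := hX.const_mul l
  have hlY : MemLp (fun ω => (1 - l) * Y ω) p μ := hY.const_mul (1 - l)
  have hDmix : D (fun ω => l * X ω + (1 - l) * Y ω) ≤ l * D X + (1 - l) * D Y := by
    calc _ ≤ D (fun ω => l * X ω) + D (fun ω => (1 - l) * Y ω) := hD.2.2.2.2 _ _ hlX hlY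
      _ = l * D X + (1 - l) * D Y := by rw [hD.2.2.2.1 X hX l hl0, hD.2.2.2.1 Y hY _ hl0']
  have hgmix : g (D (fun ω => l * X ω + (1 - l) * Y ω)) ≤ l * g (D X) + (1 - l) * g (D Y) := by
    have hconv := hgc.2 (hD.1 X hX) (hD.1 Y hY) hl0 hl0' (by ring)
    simp only [smul_eq_mul] at hconv
    exact (hg (hD.1 _ (hlX.add hlY)) (hgc.1 (hD.1 X hX) (hD.1 Y hY) hl0 hl0' (by ring))
      hDmix).trans hconv
  have hint : ∫ ω, (l * X ω + (1 - l) * Y ω) ∂μ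
      = l * (∫ ω, X ω ∂μ) + (1 - l) * ∫ ω, Y ω ∂μ := by
    rw [integral_add ((hX.integrable hp).const_mul l) ((hY.integrable hp).const_mul (1 - l)),
      integral_const_mul, integral_const_mul]
  simp only [MD, hint]
  linear_combination hgmix

lemma not_posHom_MD (hD : IsDeviation μ p D) (hDr : RangeNormalized μ p D)
    (hg : StrictConvexOn ℝ (Ici 0) g) (hg0 : g 0 = 0) : ¬ PosHom μ p (MD μ D g) := by
  intro hPH
  obtain ⟨X, hX, -, -, hDX⟩ := hDr.2 0 zero_lt_one
  rw [zero_mul] at hDX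
  have hhalf := hPH X hX (1 / 2) one_half_pos
  simp only [MD, integral_const_mul, hD.2.2.2.1 X hX _ one_half_pos.le] at hhalf
  have hstrict := hg.2 self_mem_Ici hDX.le hDX.ne one_half_pos one_half_pos (add_halves 1)
  simp only [smul_eq_mul, mul_zero, zero_add, hg0] at hstrict
  linarith

end MeanDeviation

theorem convex_not_coherent_example_general
    (μ : Measure Ω) [IsProbabilityMeasure μ]
    (p : ℝ≥0∞) (hp : 1 ≤ p)
    (D : (Ω → ℝ) → ℝ) (hD : IsDeviation μ p D)
    (hDr : RangeNormalized μ p D)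
    (β : ℝ) (hβ : 0 < β) :
    ConvexRiskMeasure μ p
        (fun X => (∫ ω, X ω ∂μ) + D X + (Real.exp (-β * D X) - 1) / β) ∧
      ¬ Coherent μ p
          (fun X => (∫ ω, X ω ∂μ) + D X + (Real.exp (-β * D X) - 1) / β) := by
  have hρ : (fun X => (∫ ω, X ω ∂μ) + D X + (Real.exp (-β * D X) - 1) / β)
      = MD μ D (expPenalty β) := by
    funext X
    simp only [MD, expPenalty]
    ring
  have hstrict := (strictConvexOn_expPenalty hβ).subset (subset_univ _) (convex_Ici 0)
  have hmono := monotoneOn_expPenalty hβ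
  rw [hρ]
  exact ⟨⟨⟨monotoneRM_MD hp hD hDr hmono (lipschitzOnWith_expPenalty hβ),
      cashAdditive_MD hp hD⟩,
      convexRMProp_MD hp hD hmono hstrict.convexOn⟩,
    fun hcoh => not_posHom_MD hD hDr hstrict expPenalty_zero hcoh.2.2.1⟩

/-- Example (exm:1 (i)): `ρ(X) = E[X] + D(X) + (e^{−β D(X)} − 1)/β` is a convex risk
measure but not a coherent risk measure. -/
theorem convex_not_coherent_example
    (μ : Measure Ω) [IsProbabilityMeasure μ] (hna : Nonatomic μ)
    (p : ℝ≥0∞) (hp : 1 ≤ p)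
    (D : (Ω → ℝ) → ℝ) (hD : IsDeviation μ p D) (hDl : LawInvariant μ p D)
    (hDr : RangeNormalized μ p D)
    (β : ℝ) (hβ : 0 < β) :
    ConvexRiskMeasure μ p
        (fun X => (∫ ω, X ω ∂μ) + D X + (Real.exp (-β * D X) - 1) / β) ∧
      ¬ Coherent μ p
          (fun X => (∫ ω, X ω ∂μ) + D X + (Real.exp (-β * D X) - 1) / β) :=
  convex_not_coherent_example_general μ p hp D hD hDr β hβ
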